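/- Let μ be the Lévy measure of a subordinator with Laplace exponent φ and H(λ) = φ(λ) - λφ'(λ). Then μ(r,∞) ≤ 2e·H(r^{-1}) for all r > 0. -/

import Mathlib

/-!
The drift cancels in `H(λ) = φ(λ) - λφ'(λ)`, leaving `H(λ) = ∫ g(λt) μ(dt)` with
`g(x) = 1 - (1 + x)e^{-x}`. Since `g'(x) = x e^{-x} ≥ 0`, `g` is nonnegative and increasing on
`[0, ∞)`, so for `λ = r⁻¹` the integrand is at least `g(1) = 1 - 2/e` on `(r, ∞)`. Markov's
inequality gives `(1 - 2/e) μ(r, ∞) ≤ H(r⁻¹)`, and `1 / (1 - 2/e) ≤ 2e` because `e ≥ 5/2`.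
-/

open MeasureTheory Set Real

noncomputable def hKernel (x : ℝ) : ℝ := 1 - (1 + x) * exp (-x)

lemma hasDerivAt_hKernel (x : ℝ) : HasDerivAt hKernel (x * exp (-x)) x := by
  have h : HasDerivAt (fun x => (1 + x) * exp (-x)) (1 * exp (-x) + (1 + x) * -exp (-x)) x := by
    simpa using ((hasDerivAt_id x).const_add 1).fun_mul (hasDerivAt_neg x).exp
  exact (h.const_sub 1).congr_deriv (by ring)

lemma monotoneOn_hKernel : MonotoneOn hKernel (Ici 0) := by
  refine monotoneOn_of_deriv_nonneg (convex_Ici 0)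
    (fun x _ => (hasDerivAt_hKernel x).continuousAt.continuousWithinAt)
    (fun x _ => (hasDerivAt_hKernel x).differentiableAt.differentiableWithinAt) fun x hx => ?_
  rw [interior_Ici] at hx
  rw [(hasDerivAt_hKernel x).deriv]
  exact mul_nonneg (le_of_lt hx) (exp_pos _).le

lemma hKernel_nonneg {x : ℝ} (hx : 0 ≤ x) : 0 ≤ hKernel x := by
  simpa [hKernel] using monotoneOn_hKernel self_mem_Ici hx hx

lemma hKernel_one : hKernel 1 = 1 - 2 / exp 1 := by
  rw [hKernel, exp_neg]
  ring

lemma hKernel_one_pos : 0 < hKernel 1 := by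
  rw [hKernel_one, sub_pos, div_lt_one (exp_pos 1)]
  linarith [exp_one_gt_d9]

lemma mul_measureReal_le_integral {α : Type*} [MeasurableSpace α] {ν : Measure α} {f : α → ℝ}
    {s : Set α} {c : ℝ} (hc : 0 < c) (hf_nonneg : 0 ≤ᵐ[ν] f) (hf : Integrable f ν)
    (hs : ∀ x ∈ s, c ≤ f x) : c * ν.real s ≤ ∫ x, f x ∂ν :=
  (mul_le_mul_of_nonneg_left (measureReal_mono hs (hf.measure_ge_lt_top hc).ne) hc.le).trans
    (mul_meas_ge_le_integral_of_nonneg hf_nonneg hf c)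

def IsSubordinatorLevyMeasure (μ : Measure ℝ) : Prop :=
  ∫⁻ t in Ioi (0:ℝ), ENNReal.ofReal (min 1 t) ∂μ < ⊤

section LevyMeasure

variable {μ : Measure ℝ}

lemma integrableOn_Ioi_of_norm_le_mul_min (hμ : IsSubordinatorLevyMeasure μ) {f : ℝ → ℝ} {C : ℝ}
    (hf : AEStronglyMeasurable f (μ.restrict (Ioi 0))) (hfC : ∀ t > 0, ‖f t‖ ≤ C * min 1 t) :
    IntegrableOn f (Ioi 0) μ := by
  have hmin : IntegrableOn (fun t => min 1 t) (Ioi 0) μ := by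
    refine ⟨(continuous_const.min continuous_id).aestronglyMeasurable, ?_⟩
    rw [hasFiniteIntegral_iff_ofReal]
    · exact hμ
    · filter_upwards [ae_restrict_mem measurableSet_Ioi] with t ht
      exact le_min zero_le_one (le_of_lt ht)
  refine (hmin.const_mul C).mono' hf ?_
  filter_upwards [ae_restrict_mem measurableSet_Ioi] with t ht using hfC t ht

lemma integrableOn_one_sub_exp_neg_mul (hμ : IsSubordinatorLevyMeasure μ) {a : ℝ} (ha : 0 < a) :
    IntegrableOn (fun t => 1 - exp (-(a * t))) (Ioi 0) μ := by
  refine integrableOn_Ioi_of_norm_le_mul_min hμ (C := max 1 a) (by fun_prop) fun t ht => ?_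
  have hle_one : exp (-(a * t)) ≤ 1 := exp_le_one_iff.mpr (by nlinarith)
  have hle_mul : 1 - exp (-(a * t)) ≤ a * t := by linarith [one_sub_le_exp_neg (a * t)]
  rw [norm_of_nonneg (by linarith)]
  rcases le_total t 1 with h | h
  · rw [min_eq_right h]
    nlinarith [le_max_right 1 a]
  · rw [min_eq_left h, mul_one]
    linarith [le_max_left 1 a, exp_pos (-(a * t))]

lemma integrableOn_mul_exp_neg_mul (hμ : IsSubordinatorLevyMeasure μ) {a : ℝ} (ha : 0 < a) :
    IntegrableOn (fun t => t * exp (-(a * t))) (Ioi 0) μ := by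
  refine integrableOn_Ioi_of_norm_le_mul_min hμ (C := max 1 (a⁻¹ * exp (-1))) (by fun_prop)
    fun t ht => ?_
  have hle_one : exp (-(a * t)) ≤ 1 := exp_le_one_iff.mpr (by nlinarith)
  rw [norm_of_nonneg (by positivity)]
  rcases le_total t 1 with h | h
  · rw [min_eq_right h]
    nlinarith [le_max_left 1 (a⁻¹ * exp (-1))]
  · rw [min_eq_left h, mul_one]
    calc t * exp (-(a * t)) = a⁻¹ * (a * t * exp (-(a * t))) := by field_simp
      _ ≤ a⁻¹ * exp (-1) := by gcongr; exact mul_exp_neg_le_exp_neg_one _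
      _ ≤ _ := le_max_right _ _

lemma hasDerivAt_integral_one_sub_exp_neg_mul (hμ : IsSubordinatorLevyMeasure μ) {l : ℝ}
    (hl : 0 < l) :
    HasDerivAt (fun x => ∫ t in Ioi (0:ℝ), (1 - exp (-(x * t))) ∂μ)
      (∫ t in Ioi (0:ℝ), t * exp (-(l * t)) ∂μ) l := by
  refine (hasDerivAt_integral_of_dominated_loc_of_deriv_le (F := fun x t => 1 - exp (-(x * t)))
    (F' := fun x t => t * exp (-(x * t))) (Metric.ball_mem_nhds l (half_pos hl))
    (.of_forall fun x => by fun_prop) (integrableOn_one_sub_exp_neg_mul hμ hl) (by fun_prop) ?_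
    (integrableOn_mul_exp_neg_mul hμ (half_pos hl)) (.of_forall fun t x _ => ?_)).2
  · filter_upwards [ae_restrict_mem measurableSet_Ioi] with t (ht : 0 < t) x hx
    have hx : l / 2 < x := by linarith [(abs_lt.mp (mem_ball_iff_norm.mp hx)).1]
    rw [norm_of_nonneg (by positivity)]
    gcongr
  · have h : HasDerivAt (fun x => exp (-(x * t))) (exp (-(x * t)) * -t) x := by
      simpa using ((hasDerivAt_id x).mul_const t).neg.exp
    convert h.const_sub 1 using 1
    ring

lemma sub_mul_deriv_eq_integral_hKernel (hμ : IsSubordinatorLevyMeasure μ) {b : ℝ} {φ : ℝ → ℝ}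
    (hφ : ∀ l > 0, φ l = b * l + ∫ t in Ioi (0:ℝ), (1 - exp (-(l * t))) ∂μ) {l : ℝ} (hl : 0 < l) :
    φ l - l * deriv φ l = ∫ t in Ioi (0:ℝ), hKernel (l * t) ∂μ := by
  have hderiv : HasDerivAt φ (b + ∫ t in Ioi (0:ℝ), t * exp (-(l * t)) ∂μ) l := by
    refine (((hasDerivAt_id l).const_mul b).add
      (hasDerivAt_integral_one_sub_exp_neg_mul hμ hl)).congr_of_eventuallyEq ?_ |>.congr_deriv
      (by simp)
    filter_upwards [isOpen_Ioi.mem_nhds hl] with x hx using hφ x hx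
  rw [hderiv.deriv, hφ l hl, mul_add, ← integral_const_mul, mul_comm l b, add_sub_add_left_eq_sub,
    ← integral_sub (integrableOn_one_sub_exp_neg_mul hμ hl)
      ((integrableOn_mul_exp_neg_mul hμ hl).const_mul l)]
  refine integral_congr_ae (.of_forall fun t => ?_)
  simp only [hKernel]
  ring

lemma hKernel_one_mul_measureReal_Ioi_le (hμ : IsSubordinatorLevyMeasure μ) {r : ℝ}
    (hr : 0 < r) :
    hKernel 1 * μ.real (Ioi r) ≤ ∫ t in Ioi (0:ℝ), hKernel (r⁻¹ * t) ∂μ := by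
  have hl : 0 < r⁻¹ := inv_pos.mpr hr
  have hint : IntegrableOn (fun t => hKernel (r⁻¹ * t)) (Ioi 0) μ := by
    refine ((integrableOn_one_sub_exp_neg_mul hμ hl).sub
      ((integrableOn_mul_exp_neg_mul hμ hl).const_mul r⁻¹)).congr (.of_forall fun t => ?_)
    simp only [Pi.sub_apply, hKernel]
    ring
  have hrestrict : (μ.restrict (Ioi 0)).real (Ioi r) = μ.real (Ioi r) := by
    rw [measureReal_restrict_apply measurableSet_Ioi, Ioi_inter_Ioi, max_eq_left hr.le]
  rw [← hrestrict]
  refine mul_measureReal_le_integral hKernel_one_pos ?_ hint fun t (ht : r < t) => ?_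
  · filter_upwards [ae_restrict_mem measurableSet_Ioi] with t (ht : 0 < t)
    exact hKernel_nonneg (by positivity)
  · have h1 : 1 ≤ r⁻¹ * t := by rw [le_inv_mul_iff₀ hr]; linarith
    exact monotoneOn_hKernel (mem_Ici.mpr zero_le_one) (mem_Ici.mpr (zero_le_one.trans h1)) h1

end LevyMeasure

theorem stmt9_general (μ : Measure ℝ)
    (hμ : ∫⁻ t in Ioi (0:ℝ), ENNReal.ofReal (min 1 t) ∂μ < ⊤)
    (b : ℝ)
    (φ H : ℝ → ℝ)
    (hφ : ∀ l > 0, φ l = b * l + ∫ t in Ioi (0:ℝ), (1 - exp (-(l * t))) ∂μ)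
    (hH : ∀ l > 0, H l = φ l - l * deriv φ l) :
    ∀ r > 0, (μ (Ioi r)).toReal ≤ 2 * exp 1 * H r⁻¹ := by
  intro r hr
  have hmarkov := hKernel_one_mul_measureReal_Ioi_le hμ hr
  rw [← sub_mul_deriv_eq_integral_hKernel hμ hφ (inv_pos.mpr hr), ← hH _ (inv_pos.mpr hr),
    hKernel_one, measureReal_def] at hmarkov
  have he : (5 / 2 : ℝ) ≤ exp 1 := by linarith [exp_one_gt_d9]
  calc (μ (Ioi r)).toReal ≤ (2 * exp 1 - 4) * (μ (Ioi r)).toReal :=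
        le_mul_of_one_le_left ENNReal.toReal_nonneg (by linarith)
    _ = 2 * exp 1 * ((1 - 2 / exp 1) * (μ (Ioi r)).toReal) := by field_simp; ring
    _ ≤ 2 * exp 1 * H r⁻¹ := by gcongr

theorem stmt9 (μ : Measure ℝ)
    (hμ : ∫⁻ t in Ioi (0:ℝ), ENNReal.ofReal (min 1 t) ∂μ < ⊤)
    (b : ℝ) (hb : 0 ≤ b)
    (φ H : ℝ → ℝ)
    (hφ : ∀ l > 0, φ l = b * l + ∫ t in Ioi (0:ℝ), (1 - exp (-(l * t))) ∂μ)
    (hH : ∀ l > 0, H l = φ l - l * deriv φ l) :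
    ∀ r > 0, (μ (Ioi r)).toReal ≤ 2 * exp 1 * H r⁻¹ :=
  stmt9_general μ hμ b φ H hφ hH
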